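/- The map f is a homeomorphism of 𝔻 onto itself, with inverse F: that is, f maps 𝔻 into 𝔻, F maps 𝔻 into 𝔻, f and F are continuous on 𝔻, and F(f(z)) = z and f(F(z)) = z for all z ∈ 𝔻. -/

import Mathlib

/-- The open unit disk in `ℂ`. -/
def unitDisk : Set ℂ := {z : ℂ | ‖z‖ < 1}

/-- The map `f` on the open unit disk. -/
noncomputable def mapF (z : ℂ) : ℂ :=
  if z = 0 then 0 else
    (Real.exp 1 * z / (Real.exp 1 * ‖z‖ - ‖z‖ + 1)) *
      Complex.exp (2 * Real.pi * Complex.I *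
        Real.log (‖z‖ / (1 - ‖z‖)))

/-- The map `F`, the inverse of `f`, on the open unit disk. -/
noncomputable def mapFinv (w : ℂ) : ℂ :=
  if w = 0 then 0 else
    ((Real.exp 1)⁻¹ * w / ((Real.exp 1)⁻¹ * ‖w‖ - ‖w‖ + 1)) *
      Complex.exp (-(2 * Real.pi * Complex.I *
        Real.log (‖w‖ / (1 - ‖w‖))))


/-!
Write `r = ‖z‖` and measure the radius by its log-odds `log (r / (1 - r))`. The map
`twistMap a c` multiplies the odds `r / (1 - r)` by `a`, i.e. translates the log-odds by
`log a`, and rotates by the phase `exp (c · log-odds)`. Hence twists compose like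
`twistMap b d ∘ twistMap a c = exp (d log a) • twistMap (a * b) (c + d)`; for
`f = twistMap e (2πi)` and `F = twistMap e⁻¹ (-2πi)` the stray phase is `exp (∓2πi) = 1`,
so `F ∘ f` and `f ∘ F` are `twistMap 1 0 = id`. Continuity at `0` comes from
`‖twistMap a c z‖ = a r / ((a - 1) r + 1)`.
-/

open Filter Topology

noncomputable def twistMap (a : ℝ) (c : ℂ) (z : ℂ) : ℂ :=
  if z = 0 then 0 else
    (a * z / (a * ‖z‖ - ‖z‖ + 1)) * Complex.exp (c * Real.log (‖z‖ / (1 - ‖z‖)))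

noncomputable def radialFactor (a r : ℝ) : ℝ := a / (a * r - r + 1)

lemma mapF_eq_twistMap : mapF = twistMap (Real.exp 1) (2 * Real.pi * Complex.I) := rfl

lemma mapFinv_eq_twistMap :
    mapFinv = twistMap (Real.exp 1)⁻¹ (-(2 * Real.pi * Complex.I)) := by
  ext w
  simp only [mapFinv, twistMap, neg_mul]

section radialFactor

variable {a b r : ℝ}

lemma radialFactor_denom_pos (ha : 0 < a) (hr₀ : 0 ≤ r) (hr₁ : r < 1) :
    0 < a * r - r + 1 := by
  nlinarith

lemma radialFactor_pos (ha : 0 < a) (hr₀ : 0 ≤ r) (hr₁ : r < 1) : 0 < radialFactor a r :=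
  div_pos ha (radialFactor_denom_pos ha hr₀ hr₁)

lemma radialFactor_mul_lt_one (ha : 0 < a) (hr₀ : 0 ≤ r) (hr₁ : r < 1) :
    radialFactor a r * r < 1 := by
  rw [radialFactor, div_mul_eq_mul_div, div_lt_one (radialFactor_denom_pos ha hr₀ hr₁)]
  linarith

lemma radialFactor_mul_odds (ha : 0 < a) (hr₀ : 0 ≤ r) (hr₁ : r < 1) :
    radialFactor a r * r / (1 - radialFactor a r * r) = a * (r / (1 - r)) := by
  have hD := (radialFactor_denom_pos ha hr₀ hr₁).ne'
  rw [radialFactor, div_mul_eq_mul_div, one_sub_div hD, div_div_div_cancel_right₀ hD,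
    mul_div_assoc]
  congr 2
  ring

lemma radialFactor_comp (ha : 0 < a) (hr₀ : 0 ≤ r) (hr₁ : r < 1) :
    radialFactor b (radialFactor a r * r) * radialFactor a r = radialFactor (a * b) r := by
  have hD := (radialFactor_denom_pos ha hr₀ hr₁).ne'
  have hdenom : b * (a / (a * r - r + 1) * r) - a / (a * r - r + 1) * r + 1
      = (a * b * r - r + 1) / (a * r - r + 1) := by
    rw [eq_div_iff hD]
    linear_combination (b * r - r) * div_mul_cancel₀ a hD
  simp only [radialFactor, hdenom]
  rw [div_div_eq_mul_div, div_mul_div_comm, mul_right_comm, mul_div_mul_right _ _ hD,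
    mul_comm b a]

end radialFactor

section twistMap

variable {a b : ℝ} {c d : ℂ} {z : ℂ}

@[simp]
lemma twistMap_zero : twistMap a c 0 = 0 := if_pos rfl

lemma twistMap_of_ne_zero (hz : z ≠ 0) :
    twistMap a c z
      = radialFactor a ‖z‖ * z * Complex.exp (c * Real.log (‖z‖ / (1 - ‖z‖))) := by
  rw [twistMap, if_neg hz, radialFactor]
  push_cast
  ring

lemma norm_twistMap (ha : 0 < a) (hc : c.re = 0) (hz : ‖z‖ < 1) :
    ‖twistMap a c z‖ = radialFactor a ‖z‖ * ‖z‖ := by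
  rcases eq_or_ne z 0 with rfl | hz₀
  · simp
  rw [twistMap_of_ne_zero hz₀, norm_mul, norm_mul, Complex.norm_exp, Complex.re_mul_ofReal, hc,
    zero_mul, Real.exp_zero, mul_one, Complex.norm_real, Real.norm_of_nonneg
    (radialFactor_pos ha (norm_nonneg z) hz).le]

lemma twistMap_mem_unitDisk (ha : 0 < a) (hc : c.re = 0) (hz : z ∈ unitDisk) :
    twistMap a c z ∈ unitDisk := by
  change ‖twistMap a c z‖ < 1
  rw [norm_twistMap ha hc hz]
  exact radialFactor_mul_lt_one ha (norm_nonneg z) hz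

lemma twistMap_twistMap (ha : 0 < a) (hc : c.re = 0) (hz : ‖z‖ < 1) :
    twistMap b d (twistMap a c z)
      = Complex.exp (d * Real.log a) * twistMap (a * b) (c + d) z := by
  rcases eq_or_ne z 0 with rfl | hz₀
  · simp
  have hr₀ : 0 < ‖z‖ := norm_pos_iff.mpr hz₀
  have hnorm := norm_twistMap ha hc hz
  have hw₀ : twistMap a c z ≠ 0 := by
    rw [← norm_pos_iff, hnorm]
    exact mul_pos (radialFactor_pos ha hr₀.le hz) hr₀
  have hlog : Real.log (radialFactor a ‖z‖ * ‖z‖ / (1 - radialFactor a ‖z‖ * ‖z‖))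
      = Real.log a + Real.log (‖z‖ / (1 - ‖z‖)) := by
    rw [radialFactor_mul_odds ha hr₀.le hz,
      Real.log_mul ha.ne' (div_pos hr₀ (by linarith)).ne']
  rw [twistMap_of_ne_zero hw₀, hnorm, hlog, twistMap_of_ne_zero hz₀, twistMap_of_ne_zero hz₀,
    ← radialFactor_comp ha hr₀.le hz]
  push_cast
  rw [mul_add, add_mul, Complex.exp_add, Complex.exp_add]
  ring

lemma twistMap_one_zero : twistMap 1 0 z = z := by
  rcases eq_or_ne z 0 with rfl | hz₀
  · simp
  simp [twistMap_of_ne_zero hz₀, radialFactor]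

lemma twistMap_inv_neg_twistMap (ha : 0 < a) (hc : c.re = 0)
    (hca : Complex.exp (c * Real.log a) = 1) (hz : ‖z‖ < 1) :
    twistMap a⁻¹ (-c) (twistMap a c z) = z := by
  rw [twistMap_twistMap ha hc hz, mul_inv_cancel₀ ha.ne', add_neg_cancel,
    twistMap_one_zero, neg_mul, Complex.exp_neg, hca, inv_one, one_mul]

lemma twistMap_twistMap_inv_neg (ha : 0 < a) (hc : c.re = 0)
    (hca : Complex.exp (c * Real.log a) = 1) (hz : ‖z‖ < 1) :
    twistMap a c (twistMap a⁻¹ (-c) z) = z := by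
  have hca' : Complex.exp (-c * Real.log a⁻¹) = 1 := by
    rw [Real.log_inv, Complex.ofReal_neg, neg_mul_neg, hca]
  simpa using twistMap_inv_neg_twistMap (inv_pos.2 ha) (by simpa using hc) hca' hz

lemma continuousAt_twistMap (ha : 0 < a) (hz₀ : z ≠ 0) (hz : ‖z‖ < 1) :
    ContinuousAt (twistMap a c) z := by
  have hr₀ : 0 < ‖z‖ := norm_pos_iff.mpr hz₀
  have hD := (radialFactor_denom_pos ha hr₀.le hz).ne'
  have h₁ : 1 - ‖z‖ ≠ 0 := by linarith
  have hodds : ‖z‖ / (1 - ‖z‖) ≠ 0 := div_ne_zero hr₀.ne' h₁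
  have hformula : ContinuousAt (fun w : ℂ =>
      radialFactor a ‖w‖ * w * Complex.exp (c * Real.log (‖w‖ / (1 - ‖w‖)))) z := by
    unfold radialFactor
    fun_prop (disch := assumption) [Complex.continuous_ofReal]
  refine hformula.congr ?_
  filter_upwards [isOpen_ne.mem_nhds hz₀] with w hw
  exact (twistMap_of_ne_zero hw).symm

lemma continuousWithinAt_twistMap_zero (ha : 0 < a) (hc : c.re = 0) :
    ContinuousWithinAt (twistMap a c) unitDisk 0 := by
  rw [ContinuousWithinAt, twistMap_zero, tendsto_zero_iff_norm_tendsto_zero]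
  have hnorm : Tendsto (fun w : ℂ => radialFactor a ‖w‖ * ‖w‖) (𝓝 0) (𝓝 0) := by
    have : ContinuousAt (fun w : ℂ => radialFactor a ‖w‖ * ‖w‖) 0 := by
      unfold radialFactor
      fun_prop (disch := norm_num)
    simpa using this.tendsto
  refine (hnorm.mono_left nhdsWithin_le_nhds).congr' ?_
  filter_upwards [self_mem_nhdsWithin] with w hw
  exact (norm_twistMap ha hc hw).symm

lemma continuousOn_twistMap (ha : 0 < a) (hc : c.re = 0) :
    ContinuousOn (twistMap a c) unitDisk := by
  intro z hz
  rcases eq_or_ne z 0 with rfl | hz₀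
  · exact continuousWithinAt_twistMap_zero ha hc
  · exact (continuousAt_twistMap ha hz₀ hz).continuousWithinAt

end twistMap

theorem stmt_5 :
    Set.MapsTo mapF unitDisk unitDisk ∧ Set.MapsTo mapFinv unitDisk unitDisk ∧
      ContinuousOn mapF unitDisk ∧ ContinuousOn mapFinv unitDisk ∧
      (∀ z ∈ unitDisk, mapFinv (mapF z) = z) ∧ (∀ z ∈ unitDisk, mapF (mapFinv z) = z) := by
  have he : 0 < Real.exp 1 := Real.exp_pos 1
  have hc : (2 * Real.pi * Complex.I).re = 0 := by simp
  have hc' : (-(2 * Real.pi * Complex.I)).re = 0 := by simp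
  have hce : Complex.exp (2 * Real.pi * Complex.I * Real.log (Real.exp 1)) = 1 := by
    rw [Real.log_exp, Complex.ofReal_one, mul_one, Complex.exp_two_pi_mul_I]
  rw [mapF_eq_twistMap, mapFinv_eq_twistMap]
  exact ⟨fun z hz => twistMap_mem_unitDisk he hc hz,
    fun z hz => twistMap_mem_unitDisk (inv_pos.2 he) hc' hz,
    continuousOn_twistMap he hc, continuousOn_twistMap (inv_pos.2 he) hc',
    fun z hz => twistMap_inv_neg_twistMap he hc hce hz,
    fun z hz => twistMap_twistMap_inv_neg he hc hce hz⟩
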